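/- arXiv:2406.16423 — 9 statements merged into one kernel-verified Lean document; each statement's English description precedes it below -/
import Mathlib

section
/- Let m ≠ 0, ω, h > 0 be real and define H(p, q) = p²/(2m) + (mω²/2)·q². If (p', q')ᵗ = Φ·(p, q)ᵗ, where Φ = (1/(1 + ω²h²/4))·[[1 − ω²h²/4, −mω²h], [h/m, 1 − ω²h²/4]], then H(p', q') = H(p, q); that is, the exact harmonic-oscillator energy is conserved by the midpoint variational scheme. -/
/-- The exact harmonic-oscillator energy is conserved by the midpoint variational scheme. -/
theorem midpoint_scheme_conserves_energy
    (m ω h : ℝ) (hm : m ≠ 0) (hω : 0 < ω) (hh : 0 < h)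
    (H : ℝ → ℝ → ℝ)
    (hH : ∀ p q : ℝ, H p q = p ^ 2 / (2 * m) + (m * ω ^ 2 / 2) * q ^ 2)
    (p q p' q' : ℝ)
    (hstep : ((1 / (1 + ω ^ 2 * h ^ 2 / 4)) •
        !![1 - ω ^ 2 * h ^ 2 / 4, -(m * ω ^ 2 * h);
           h / m, 1 - ω ^ 2 * h ^ 2 / 4]).mulVec ![p, q] = ![p', q']) :
    H p' q' = H p q := by
  have h0 := congrFun hstep 0
  have h1 := congrFun hstep 1
  simp [Matrix.mulVec, dotProduct, Fin.sum_univ_two] at h0 h1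
  have hd : (1 + ω ^ 2 * h ^ 2 / 4) ≠ 0 := by positivity
  rw [hH, hH, ← h0, ← h1]
  field_simp
  ring
end

section
/- Let m be real, h > 0, and let V : ℝ → ℝ be differentiable. Define the Simpson discrete Lagrangian L_h(q_ℓ, q_m, q_r) = (m·h/12)·(g_ℓ² + 4g_m² + g_r²) − (h/6)·(V(q_ℓ) + 4V(q_m) + V(q_r)), where g_ℓ = (−3q_ℓ + 4q_m − q_r)/h, g_m = (q_r − q_ℓ)/h, g_r = (q_ℓ − 4q_m + 3q_r)/h. Then the partial derivative ∂L_h/∂q_m (q_ℓ, q_m, q_r) vanishes if and only if (4m/h²)·(q_ℓ − 2q_m + q_r) + V'(q_m) = 0. -/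
/-!
In the middle variable the Simpson Lagrangian is a quadratic kinetic term minus `(2h/3) V(q_m)`.
Differentiating, `∂L_h/∂q_m = -(2h/3) · ((4m/h²)(q_ℓ - 2q_m + q_r) + V'(q_m))`, and the prefactor
`-(2h/3)` is nonzero.
-/

noncomputable section

namespace Simpson

/-- The three quotients are the slopes of the quadratic interpolant at `0`, `h/2` and `h`. -/
def lagrangian (m h : ℝ) (V : ℝ → ℝ) (qℓ qm qr : ℝ) : ℝ :=
  (m * h / 12) * (((-3 * qℓ + 4 * qm - qr) / h) ^ 2
    + 4 * ((qr - qℓ) / h) ^ 2 + ((qℓ - 4 * qm + 3 * qr) / h) ^ 2)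
  - (h / 6) * (V qℓ + 4 * V qm + V qr)

variable {m h : ℝ} {V : ℝ → ℝ} {qℓ qm qr : ℝ}

theorem hasDerivAt_kinetic_mid (hh : h ≠ 0) :
    HasDerivAt (fun x => (m * h / 12) * (((-3 * qℓ + 4 * x - qr) / h) ^ 2
        + 4 * ((qr - qℓ) / h) ^ 2 + ((qℓ - 4 * x + 3 * qr) / h) ^ 2))
      (-(2 * h / 3) * ((4 * m / h ^ 2) * (qℓ - 2 * qm + qr))) qm := by
  have hℓ : HasDerivAt (fun x => (-3 * qℓ + 4 * x - qr) / h) (4 / h) qm := by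
    simpa using ((((hasDerivAt_id qm).const_mul 4).const_add (-3 * qℓ)).sub_const qr).div_const h
  have hr : HasDerivAt (fun x => (qℓ - 4 * x + 3 * qr) / h) (-4 / h) qm := by
    simpa [neg_div] using
      ((((hasDerivAt_id qm).const_mul 4).const_sub qℓ).add_const (3 * qr)).div_const h
  refine ((((hℓ.pow 2).add_const _).add (hr.pow 2)).const_mul _).congr_deriv ?_
  simp only [Nat.cast_ofNat, Nat.succ_sub_one, pow_one]
  field_simp
  ring

theorem hasDerivAt_potential_mid (hV : DifferentiableAt ℝ V qm) :
    HasDerivAt (fun x => (h / 6) * (V qℓ + 4 * V x + V qr)) ((2 * h / 3) * deriv V qm) qm := by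
  refine ((((hV.hasDerivAt.const_mul 4).const_add (V qℓ)).add_const (V qr)).const_mul
    (h / 6)).congr_deriv ?_
  ring

theorem hasDerivAt_lagrangian_mid (hh : h ≠ 0) (hV : DifferentiableAt ℝ V qm) :
    HasDerivAt (fun x => lagrangian m h V qℓ x qr)
      (-(2 * h / 3) * ((4 * m / h ^ 2) * (qℓ - 2 * qm + qr) + deriv V qm)) qm :=
  ((hasDerivAt_kinetic_mid hh).sub (hasDerivAt_potential_mid hV)).congr_deriv (by ring)

theorem deriv_lagrangian_mid_eq_zero_iff (hh : h ≠ 0) (hV : DifferentiableAt ℝ V qm) :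
    deriv (fun x => lagrangian m h V qℓ x qr) qm = 0 ↔
      (4 * m / h ^ 2) * (qℓ - 2 * qm + qr) + deriv V qm = 0 := by
  rw [(hasDerivAt_lagrangian_mid hh hV).deriv, mul_eq_zero]
  have : -(2 * h / 3) ≠ 0 := by simpa using hh
  simp [this]

end Simpson

end

/-- Stationarity of the Simpson discrete Lagrangian with respect to the internal
degree of freedom is equivalent to the internal Euler–Lagrange equation. -/
theorem simpson_internal_stationarity
    (m h : ℝ) (hh : 0 < h) (V : ℝ → ℝ) (hV : Differentiable ℝ V)
    (Lh : ℝ → ℝ → ℝ → ℝ)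
    (hLh : ∀ qℓ qm qr : ℝ, Lh qℓ qm qr =
      (m * h / 12) * (((-3 * qℓ + 4 * qm - qr) / h) ^ 2
        + 4 * ((qr - qℓ) / h) ^ 2 + ((qℓ - 4 * qm + 3 * qr) / h) ^ 2)
      - (h / 6) * (V qℓ + 4 * V qm + V qr))
    (qℓ qm qr : ℝ) :
    deriv (fun x => Lh qℓ x qr) qm = 0 ↔
      (4 * m / h ^ 2) * (qℓ - 2 * qm + qr) + deriv V qm = 0 := by
  have hLh' : Lh = Simpson.lagrangian m h V := by
    funext a b c
    exact hLh a b c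
  subst hLh'
  exact Simpson.deriv_lagrangian_mid_eq_zero_iff hh.ne' (hV qm)
end

section
/- Let m, ω, h be real with h > 0 and ω²h² ≠ 8. Set q_m = (1/(1 − ω²h²/8))·(q_ℓ + q_r)/2 and let L_h(q_ℓ, q_m, q_r) = (m·h/12)·(g_ℓ² + 4g_m² + g_r²) − (h/6)·((1/2)mω²q_ℓ² + 4·(1/2)mω²q_m² + (1/2)mω²q_r²), where g_ℓ = (−3q_ℓ + 4q_m − q_r)/h, g_m = (q_r − q_ℓ)/h, g_r = (q_ℓ − 4q_m + 3q_r)/h. Then for all real q_ℓ, q_r: L_h(q_ℓ, q_m, q_r) = (1/(1 − ω²h²/8))·[ (1/2)·m·h·((q_r − q_ℓ)/h)² − (h/2)·mω²·( ((22 − h²ω²)/48)·(q_ℓ² + q_r²) + (1/12)·q_ℓ·q_r ) ]. -/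
/-!
The midpoint value `q_m` is the stationary point of `L_h` in its middle argument. Writing the
Simpson gradients around the average `(q_ℓ + q_r)/2` splits the kinetic part into
`m (q_r - q_ℓ)² / (2h)` plus a multiple of `(q_m - (q_ℓ + q_r)/2)²`, and the choice of `q_m` is
exactly `q_m - (q_ℓ + q_r)/2 = (ω²h²/8) q_m`. Substituting this, all `q_m²` terms combine into a
multiple of `(q_ℓ + q_r)²`, and what remains is a rational identity in `ω²h²/8`.
-/

/-- Simpson's rule applied to `m q̇²/2 - m ω² q²/2` on a step of length `h`, with `q̇` the
derivative of the quadratic interpolant through `qℓ, qm, qr` at the three nodes. -/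
noncomputable def simpsonLagrangian (m ω h qℓ qm qr : ℝ) : ℝ :=
  (m * h / 12) * (((-3 * qℓ + 4 * qm - qr) / h) ^ 2
      + 4 * ((qr - qℓ) / h) ^ 2 + ((qℓ - 4 * qm + 3 * qr) / h) ^ 2)
    - (h / 6) * ((1 / 2) * m * ω ^ 2 * qℓ ^ 2
      + 4 * ((1 / 2) * m * ω ^ 2 * qm ^ 2) + (1 / 2) * m * ω ^ 2 * qr ^ 2)

theorem simpsonLagrangian_eq_midpoint_deviation (m ω : ℝ) {h : ℝ} (hh : h ≠ 0)
    (qℓ qm qr : ℝ) :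
    simpsonLagrangian m ω h qℓ qm qr =
      m / (2 * h) * (qr - qℓ) ^ 2 + 8 * m / (3 * h) * (qm - (qℓ + qr) / 2) ^ 2
        - m * ω ^ 2 * h / 12 * (qℓ ^ 2 + qr ^ 2) - m * ω ^ 2 * h / 3 * qm ^ 2 := by
  unfold simpsonLagrangian
  field_simp
  ring

theorem one_div_one_sub_mul_sub_self {K : Type*} [Field K] {κ : K} (hκ : 1 - κ ≠ 0) (x : K) :
    1 / (1 - κ) * x - x = κ * (1 / (1 - κ) * x) := by
  field_simp
  ring

/-- Eliminating the internal degree of freedom from the Simpson discrete Lagrangian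
for the harmonic potential yields the reduced Lagrangian. -/
theorem simpson_reduced_lagrangian
    (m ω h : ℝ) (hh : 0 < h) (hstab : ω ^ 2 * h ^ 2 ≠ 8)
    (Lh : ℝ → ℝ → ℝ → ℝ)
    (hLh : ∀ qℓ qm qr : ℝ, Lh qℓ qm qr =
      (m * h / 12) * (((-3 * qℓ + 4 * qm - qr) / h) ^ 2
        + 4 * ((qr - qℓ) / h) ^ 2 + ((qℓ - 4 * qm + 3 * qr) / h) ^ 2)
      - (h / 6) * ((1 / 2) * m * ω ^ 2 * qℓ ^ 2
        + 4 * ((1 / 2) * m * ω ^ 2 * qm ^ 2) + (1 / 2) * m * ω ^ 2 * qr ^ 2)) :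
    ∀ qℓ qr : ℝ,
      Lh qℓ ((1 / (1 - ω ^ 2 * h ^ 2 / 8)) * ((qℓ + qr) / 2)) qr =
        (1 / (1 - ω ^ 2 * h ^ 2 / 8)) *
          ((1 / 2) * m * h * ((qr - qℓ) / h) ^ 2
            - (h / 2) * m * ω ^ 2 *
              (((22 - h ^ 2 * ω ^ 2) / 48) * (qℓ ^ 2 + qr ^ 2)
                + (1 / 12) * qℓ * qr)) := by
  intro qℓ qr
  have hκ : 1 - ω ^ 2 * h ^ 2 / 8 ≠ 0 := fun h0 => hstab (by linarith)
  have hLh' : Lh = simpsonLagrangian m ω h := by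
    funext qℓ qm qr
    exact hLh qℓ qm qr
  rw [hLh', simpsonLagrangian_eq_midpoint_deviation m ω hh.ne',
    one_div_one_sub_mul_sub_self hκ]
  have hκ' : 8 - h ^ 2 * ω ^ 2 ≠ 0 := fun h0 => hstab (by linarith)
  field_simp
  ring
end

section
/- Let m ≠ 0, ω > 0, h > 0 be real with ω²h² ≠ 8, and define the reduced Lagrangian L_h^r(q_ℓ, q_r) = (1/(1 − ω²h²/8))·[(1/2)mh((q_r − q_ℓ)/h)² − (h/2)mω²(((22 − h²ω²)/48)(q_ℓ² + q_r²) + (1/12)q_ℓ q_r)]. Then for real numbers q_{j−1}, q_j, q_{j+1}, the discrete Euler–Lagrange equation ∂L_h^r/∂q_r (q_{j−1}, q_j) + ∂L_h^r/∂q_ℓ (q_j, q_{j+1}) = 0 holds if and only if (1/h²)·(q_{j+1} − 2q_j + q_{j−1}) + (ω²/24)·(q_{j+1} + 22q_j + q_{j−1}) − (ω⁴h²/24)·q_j = 0. -/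
lemma deriv_quad (a b c x : ℝ) :
    deriv (fun t : ℝ => a * t ^ 2 + b * t + c) x = 2 * a * x + b := by
  have h1 : HasDerivAt (fun t : ℝ => a * t ^ 2 + b * t + c)
      (a * (2 * x ^ 1) + b * 1) x := by
    exact (((hasDerivAt_pow 2 x).const_mul a).add
      ((hasDerivAt_id x).const_mul b)).add_const c
  have := h1.deriv
  rw [this]; ring

/-- The discrete Euler–Lagrange equation of the reduced Simpson Lagrangian is
equivalent to the symplectic Simpson scheme. -/
theorem simpson_discrete_euler_lagrange
    (m ω h : ℝ) (hm : m ≠ 0) (hω : 0 < ω) (hh : 0 < h)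
    (hstab : ω ^ 2 * h ^ 2 ≠ 8)
    (Lhr : ℝ → ℝ → ℝ)
    (hLhr : ∀ qℓ qr : ℝ, Lhr qℓ qr =
      (1 / (1 - ω ^ 2 * h ^ 2 / 8)) *
        ((1 / 2) * m * h * ((qr - qℓ) / h) ^ 2
          - (h / 2) * m * ω ^ 2 *
            (((22 - h ^ 2 * ω ^ 2) / 48) * (qℓ ^ 2 + qr ^ 2)
              + (1 / 12) * qℓ * qr)))
    (qjm qj qjp : ℝ) :
    deriv (fun qr => Lhr qjm qr) qj + deriv (fun qℓ => Lhr qℓ qjp) qj = 0 ↔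
      (1 / h ^ 2) * (qjp - 2 * qj + qjm)
        + (ω ^ 2 / 24) * (qjp + 22 * qj + qjm)
        - (ω ^ 4 * h ^ 2 / 24) * qj = 0 := by
  have hhne : h ≠ 0 := ne_of_gt hh
  have hden : (1 : ℝ) - ω ^ 2 * h ^ 2 / 8 ≠ 0 := by
    intro H; apply hstab; linarith
  set C : ℝ := 1 / (1 - ω ^ 2 * h ^ 2 / 8) with hC
  have hCne : C ≠ 0 := one_div_ne_zero hden
  have h1 : deriv (fun qr => Lhr qjm qr) qj =
      2 * (C * (m / (2 * h) - h * m * ω ^ 2 * (22 - h ^ 2 * ω ^ 2) / 96)) * qj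
        + (C * (-(m * qjm) / h - h * m * ω ^ 2 * qjm / 24)) := by
    have heq : (fun qr => Lhr qjm qr) =
        fun qr => (C * (m / (2 * h) - h * m * ω ^ 2 * (22 - h ^ 2 * ω ^ 2) / 96)) * qr ^ 2
          + (C * (-(m * qjm) / h - h * m * ω ^ 2 * qjm / 24)) * qr
          + C * (m * qjm ^ 2 / (2 * h) - h * m * ω ^ 2 * (22 - h ^ 2 * ω ^ 2) / 96 * qjm ^ 2) := by
      funext qr; rw [hLhr]; field_simp; ring
    rw [heq, deriv_quad]
  have h2 : deriv (fun qℓ => Lhr qℓ qjp) qj =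
      2 * (C * (m / (2 * h) - h * m * ω ^ 2 * (22 - h ^ 2 * ω ^ 2) / 96)) * qj
        + (C * (-(m * qjp) / h - h * m * ω ^ 2 * qjp / 24)) := by
    have heq : (fun qℓ => Lhr qℓ qjp) =
        fun qℓ => (C * (m / (2 * h) - h * m * ω ^ 2 * (22 - h ^ 2 * ω ^ 2) / 96)) * qℓ ^ 2
          + (C * (-(m * qjp) / h - h * m * ω ^ 2 * qjp / 24)) * qℓ
          + C * (m * qjp ^ 2 / (2 * h) - h * m * ω ^ 2 * (22 - h ^ 2 * ω ^ 2) / 96 * qjp ^ 2) := by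
      funext qℓ; rw [hLhr]; field_simp; ring
    rw [heq, deriv_quad]
  rw [h1, h2]
  have hk : -(m * h * C) ≠ 0 := by
    simp [hm, hhne, hCne]
  have key : (2 * (C * (m / (2 * h) - h * m * ω ^ 2 * (22 - h ^ 2 * ω ^ 2) / 96)) * qj
        + (C * (-(m * qjm) / h - h * m * ω ^ 2 * qjm / 24)))
      + (2 * (C * (m / (2 * h) - h * m * ω ^ 2 * (22 - h ^ 2 * ω ^ 2) / 96)) * qj
        + (C * (-(m * qjp) / h - h * m * ω ^ 2 * qjp / 24)))
      = -(m * h * C) * ((1 / h ^ 2) * (qjp - 2 * qj + qjm)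
        + (ω ^ 2 / 24) * (qjp + 22 * qj + qjm)
        - (ω ^ 4 * h ^ 2 / 24) * qj) := by
    field_simp
    ring
  rw [key, mul_eq_zero]
  simp [hk]
end

section
/- Let ω > 0 and let q : ℝ → ℝ satisfy the differential equation q''(t) + ω²·q(t) = 0 on ℝ. Fix t ∈ ℝ and define, for h > 0, the truncation error T_h = (q(t+h) − 2q(t) + q(t−h))/h² + (ω²/24)·(q(t+h) + 22q(t) + q(t−h)) − (ω⁴h²/24)·q(t). Then T_h − (1/1440)·ω⁶·h⁴·q(t) = O(h⁶) as h → 0⁺; in particular the symplectic Simpson scheme is fourth order accurate in the sense of the truncation error. -/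
/-!
For an exact solution, `q (t + h) + q (t - h) - 2 * cos (ω * h) * q t` solves the oscillator
equation in `h` with zero initial data, and its conserved energy forces it to vanish. The
truncation error is therefore an explicit function of `cos (ω * h)`, and expanding the cosine to
sixth order (remainder `O((ω * h) ^ 8)`) leaves the leading term `ω ^ 6 * h ^ 4 * q t / 1440`.
-/

open Real

def IsHarmonicSolution (ω : ℝ) (f f' : ℝ → ℝ) : Prop :=
  (∀ s, HasDerivAt f (f' s) s) ∧ ∀ s, HasDerivAt f' (-(ω ^ 2 * f s)) s

namespace IsHarmonicSolution

variable {ω : ℝ} {f f' g g' : ℝ → ℝ}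

theorem add (hf : IsHarmonicSolution ω f f') (hg : IsHarmonicSolution ω g g') :
    IsHarmonicSolution ω (f + g) (f' + g') :=
  ⟨fun s ↦ (hf.1 s).add (hg.1 s),
    fun s ↦ ((hf.2 s).add (hg.2 s)).congr_deriv (by simp only [Pi.add_apply]; ring)⟩

theorem const_mul (c : ℝ) (hf : IsHarmonicSolution ω f f') :
    IsHarmonicSolution ω (fun s ↦ c * f s) (fun s ↦ c * f' s) :=
  ⟨fun s ↦ (hf.1 s).const_mul c,
    fun s ↦ ((hf.2 s).const_mul c).congr_deriv (by ring)⟩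

theorem comp_const_add (a : ℝ) (hf : IsHarmonicSolution ω f f') :
    IsHarmonicSolution ω (fun s ↦ f (a + s)) (fun s ↦ f' (a + s)) :=
  ⟨fun s ↦ (hf.1 (a + s)).comp_const_add a s, fun s ↦ (hf.2 (a + s)).comp_const_add a s⟩

theorem comp_const_sub (a : ℝ) (hf : IsHarmonicSolution ω f f') :
    IsHarmonicSolution ω (fun s ↦ f (a - s)) (fun s ↦ -f' (a - s)) :=
  ⟨fun s ↦ (hf.1 (a - s)).comp_const_sub a s,
    fun s ↦ by simpa using ((hf.2 (a - s)).comp_const_sub a s).fun_neg⟩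

theorem cos_mul (ω : ℝ) :
    IsHarmonicSolution ω (fun s ↦ cos (ω * s)) (fun s ↦ -(ω * sin (ω * s))) := by
  refine ⟨fun s ↦ ?_, fun s ↦ ?_⟩
  · simpa [mul_comm] using ((hasDerivAt_id s).const_mul ω).cos
  · exact (((hasDerivAt_id s).const_mul ω).sin.const_mul ω).fun_neg.congr_deriv (by simp; ring)

/-- The energy `f' ^ 2 + ω ^ 2 * f ^ 2` is conserved, so it vanishes identically; hence `f' = 0`. -/
theorem eq_zero (hf : IsHarmonicSolution ω f f') (h0 : f 0 = 0) (h0' : f' 0 = 0) (s : ℝ) :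
    f s = 0 := by
  have hE : ∀ s, HasDerivAt (fun s ↦ f' s ^ 2 + ω ^ 2 * f s ^ 2) 0 s := fun s ↦
    (((hf.2 s).pow 2).add (((hf.1 s).pow 2).const_mul (ω ^ 2))).congr_deriv (by ring)
  have hf'_zero (s : ℝ) : f' s = 0 := by
    have := is_const_of_deriv_eq_zero (fun s ↦ (hE s).differentiableAt) (fun s ↦ (hE s).deriv) s 0
    simp only [h0, h0'] at this
    nlinarith [sq_nonneg (f' s), sq_nonneg (ω * f s)]
  have hfs := is_const_of_deriv_eq_zero (fun s ↦ (hf.1 s).differentiableAt)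
    (fun s ↦ by rw [(hf.1 s).deriv, hf'_zero]) s 0
  rwa [h0] at hfs

theorem apply_add_add_apply_sub (hf : IsHarmonicSolution ω f f') (t h : ℝ) :
    f (t + h) + f (t - h) = 2 * cos (ω * h) * f t := by
  have hg := ((hf.comp_const_add t).add (hf.comp_const_sub t)).add
    ((cos_mul ω).const_mul (-(2 * f t)))
  have := hg.eq_zero (by simp; ring) (by simp) h
  simp only [Pi.add_apply] at this
  linarith

end IsHarmonicSolution

theorem abs_cos_sub_taylor_le {x : ℝ} (hx : |x| ≤ 1) :
    |cos x - (1 - x ^ 2 / 2 + x ^ 4 / 24 - x ^ 6 / 720)| ≤ |x| ^ 8 := by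
  have hxI : ‖(x : ℂ) * Complex.I‖ = |x| := by simp
  have hre : (∑ m ∈ Finset.range 8, ((x : ℂ) * Complex.I) ^ m / m.factorial).re =
      1 - x ^ 2 / 2 + x ^ 4 / 24 - x ^ 6 / 720 := by
    simp [Finset.sum_range_succ, pow_succ, Nat.factorial]
    ring
  calc |cos x - (1 - x ^ 2 / 2 + x ^ 4 / 24 - x ^ 6 / 720)|
      = |(Complex.exp (x * Complex.I) -
          ∑ m ∈ Finset.range 8, ((x : ℂ) * Complex.I) ^ m / m.factorial).re| := by
        rw [Complex.sub_re, hre, Complex.exp_ofReal_mul_I_re]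
    _ ≤ |x| ^ 8 * ((Nat.succ 8 : ℝ) * (Nat.factorial 8 * 8 : ℝ)⁻¹) :=
        (Complex.abs_re_le_norm _).trans (hxI ▸ Complex.exp_bound (hxI ▸ hx) (by norm_num))
    _ ≤ |x| ^ 8 := mul_le_of_le_one_right (by positivity) (by norm_num [Nat.factorial])

theorem abs_simpson_defect_le (ω h Q : ℝ) (hh : h ≠ 0) (hωh : |ω * h| ≤ 1) :
    |((2 * cos (ω * h) * Q - 2 * Q) / h ^ 2 + ω ^ 2 / 24 * (2 * cos (ω * h) * Q + 22 * Q)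
        - ω ^ 4 * h ^ 2 / 24 * Q) - 1 / 1440 * ω ^ 6 * h ^ 4 * Q| ≤ 3 * ω ^ 8 * |Q| * h ^ 6 := by
  set E := cos (ω * h) - (1 - (ω * h) ^ 2 / 2 + (ω * h) ^ 4 / 24 - (ω * h) ^ 6 / 720) with hE_def
  have hE : |E| ≤ (ω * h) ^ 8 := Even.pow_abs ⟨4, rfl⟩ (ω * h) ▸ abs_cos_sub_taylor_le hωh
  set x := ω * h
  have hx2 : x ^ 2 ≤ 1 := (sq_le_one_iff_abs_le_one x).2 hωh
  have hdefect : ((2 * cos x * Q - 2 * Q) / h ^ 2 + ω ^ 2 / 24 * (2 * cos x * Q + 22 * Q)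
        - ω ^ 4 * h ^ 2 / 24 * Q) - 1 / 1440 * ω ^ 6 * h ^ 4 * Q
      = Q * (2 * E + x ^ 2 / 12 * (E - x ^ 6 / 720)) / h ^ 2 := by
    -- the `x ^ 6` terms of the expansion add up to `(1 / 288 - 1 / 360) * x ^ 6 = x ^ 6 / 1440`
    rw [hE_def]; field_simp; ring
  have hbound : |2 * E + x ^ 2 / 12 * (E - x ^ 6 / 720)| ≤ 3 * x ^ 8 := by
    obtain ⟨hE₁, hE₂⟩ := abs_le.1 hE
    have hx2E₁ := mul_le_mul_of_nonneg_left hE₁ (sq_nonneg x)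
    have hx2E₂ := mul_le_mul_of_nonneg_left hE₂ (sq_nonneg x)
    refine abs_le.2 ⟨?_, ?_⟩ <;> nlinarith [pow_nonneg (sq_nonneg x) 3, pow_nonneg (sq_nonneg x) 4]
  calc _ = |Q| * |2 * E + x ^ 2 / 12 * (E - x ^ 6 / 720)| / h ^ 2 := by
        rw [hdefect, abs_div, abs_mul, abs_of_pos (by positivity : 0 < h ^ 2)]
    _ ≤ |Q| * (3 * x ^ 8) / h ^ 2 := by gcongr
    _ = 3 * ω ^ 8 * |Q| * h ^ 6 := by field_simp; ring

theorem simpson_scheme_truncation_error_general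
    (ω : ℝ) (q : ℝ → ℝ)
    (hq1 : Differentiable ℝ q)
    (hq2 : Differentiable ℝ (deriv q))
    (hode : ∀ s : ℝ, deriv (deriv q) s + ω ^ 2 * q s = 0)
    (t : ℝ) :
    ∃ C > (0:ℝ), ∃ h₀ > (0:ℝ), ∀ h : ℝ, 0 < h → h < h₀ →
      |((q (t + h) - 2 * q t + q (t - h)) / h ^ 2
          + (ω ^ 2 / 24) * (q (t + h) + 22 * q t + q (t - h))
          - (ω ^ 4 * h ^ 2 / 24) * q t)
        - (1 / 1440) * ω ^ 6 * h ^ 4 * q t| ≤ C * h ^ 6 := by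
  have hsol : IsHarmonicSolution ω q (deriv q) :=
    ⟨fun s ↦ (hq1 s).hasDerivAt, fun s ↦ by
      simpa [eq_neg_of_add_eq_zero_left (hode s)] using (hq2 s).hasDerivAt⟩
  refine ⟨3 * ω ^ 8 * |q t| + 1, by positivity, 1 / (|ω| + 1), by positivity, fun h hh hh₀ ↦ ?_⟩
  have hωh : |ω * h| ≤ 1 := by
    rw [lt_div_iff₀ (by positivity)] at hh₀
    rw [abs_mul, abs_of_pos hh]
    nlinarith [abs_nonneg ω]
  have key := abs_simpson_defect_le ω h (q t) hh.ne' hωh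
  rw [← hsol.apply_add_add_apply_sub] at key
  calc _ = _ := by ring_nf
    _ ≤ 3 * ω ^ 8 * |q t| * h ^ 6 := key
    _ ≤ _ := by nlinarith [pow_pos hh 6]

/-- The symplectic Simpson scheme is fourth order accurate in the sense of the
truncation error: substituting an exact solution of the harmonic oscillator,
the truncation error equals (1/1440)·ω⁶·h⁴·q(t) up to O(h⁶). -/
theorem simpson_scheme_truncation_error
    (ω : ℝ) (hω : 0 < ω) (q : ℝ → ℝ)
    (hq1 : Differentiable ℝ q)
    (hq2 : Differentiable ℝ (deriv q))
    (hode : ∀ s : ℝ, deriv (deriv q) s + ω ^ 2 * q s = 0)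
    (t : ℝ) :
    ∃ C > (0:ℝ), ∃ h₀ > (0:ℝ), ∀ h : ℝ, 0 < h → h < h₀ →
      |((q (t + h) - 2 * q t + q (t - h)) / h ^ 2
          + (ω ^ 2 / 24) * (q (t + h) + 22 * q t + q (t - h))
          - (ω ^ 4 * h ^ 2 / 24) * q t)
        - (1 / 1440) * ω ^ 6 * h ^ 4 * q t| ≤ C * h ^ 6 :=
  simpson_scheme_truncation_error_general ω q hq1 hq2 hode t
end

section
/- Let ω > 0, h > 0 with 0 < ω·h < 2√2 (equivalently ω²h² < 8). Set a = 1 + ω²h²/24 and b = −(1/24)·(48 − 22·ω²h² + ω⁴h⁴). Then every complex root z of the equation a·z² + b·z + a = 0 satisfies |z| = 1; in particular the symplectic Simpson scheme is stable under the condition 0 < ω·h < 2√2. -/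
/-!
With `x = ω²h²` and the equation scaled by 24, the characteristic polynomial is the palindromic
quadratic `A z² - B z + A` with `A = 24 + x`, `B = 48 - 22x + x²`, whose discriminant factors as
`B² - 4A² = x (x - 8) (x - 12) (x - 24)`. For `0 < x < 8` it is negative, so the roots are a
non-real conjugate pair, and their product `A / A = 1` is `|z|²`.
-/

open ComplexConjugate

theorem Complex.norm_eq_one_of_palindromic_quadratic {a b : ℝ} (hdisc : discrim a b a < 0)
    {z : ℂ} (hz : a * z ^ 2 + b * z + a = 0) : ‖z‖ = 1 := by
  have ha : (a : ℂ) ≠ 0 := by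
    rintro ha
    rw [Complex.ofReal_eq_zero.mp ha, discrim] at hdisc
    nlinarith
  have him : z.im ≠ 0 := by
    intro him
    have hre : a * (z.re * z.re) + b * z.re + a = 0 := by
      have hzre : (z.re : ℂ) = z := Complex.ext rfl (by simp [him])
      rw [← hzre] at hz
      apply Complex.ofReal_injective
      push_cast
      linear_combination hz
    rw [discrim_eq_sq_of_quadratic_eq_zero hre] at hdisc
    exact (sq_nonneg _).not_gt hdisc
  have hconj : a * conj z ^ 2 + b * conj z + a = 0 := by
    simpa using congrArg conj hz
  have hsum : a * (z + conj z) + b = 0 := by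
    have hne : z - conj z ≠ 0 := sub_ne_zero.mpr (Ne.symm (mt Complex.conj_eq_iff_im.mp him))
    exact (mul_eq_zero.mp (by linear_combination hz - hconj :
      (z - conj z) * (a * (z + conj z) + b) = 0)).resolve_left hne
  have hprod : z * conj z = 1 :=
    mul_left_cancel₀ ha (by linear_combination z * hsum - hz : a * (z * conj z) = a * 1)
  rw [Complex.mul_conj, Complex.normSq_eq_norm_sq] at hprod
  exact (pow_eq_one_iff_of_nonneg (norm_nonneg z) two_ne_zero).mp (by exact_mod_cast hprod)

theorem simpson_discrim_neg {x : ℝ} (hx₀ : 0 < x) (hx₈ : x < 8) :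
    discrim (24 + x) (-(48 - 22 * x + x ^ 2)) (24 + x) < 0 := by
  have hfactor : discrim (24 + x) (-(48 - 22 * x + x ^ 2)) (24 + x)
      = -(x * (8 - x) * (12 - x) * (24 - x)) := by
    rw [discrim]; ring
  rw [hfactor, neg_lt_zero]
  exact mul_pos (mul_pos (mul_pos hx₀ (sub_pos.mpr hx₈)) (by linarith)) (by linarith)

/-- Under the stability condition 0 < ωh < 2√2, every complex root of the
characteristic equation of the symplectic Simpson scheme has modulus one. -/
theorem simpson_scheme_stability
    (ω h : ℝ) (hω : 0 < ω) (hh : 0 < h)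
    (hstab : ω * h < 2 * Real.sqrt 2) (z : ℂ)
    (hz : ((1 : ℂ) + (ω : ℂ) ^ 2 * (h : ℂ) ^ 2 / 24) * z ^ 2
        + (-(1 / 24) * (48 - 22 * (ω : ℂ) ^ 2 * (h : ℂ) ^ 2
            + (ω : ℂ) ^ 4 * (h : ℂ) ^ 4)) * z
        + ((1 : ℂ) + (ω : ℂ) ^ 2 * (h : ℂ) ^ 2 / 24) = 0) :
    ‖z‖ = 1 := by
  have hωh : 0 < ω * h := mul_pos hω hh
  have hx₈ : (ω * h) ^ 2 < 8 := by
    calc (ω * h) ^ 2 < (2 * Real.sqrt 2) ^ 2 := pow_lt_pow_left₀ hstab hωh.le two_ne_zero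
      _ = 8 := by rw [mul_pow, Real.sq_sqrt zero_le_two]; norm_num
  refine Complex.norm_eq_one_of_palindromic_quadratic
    (simpson_discrim_neg (pow_pos hωh 2) hx₈) ?_
  push_cast
  linear_combination 24 * hz
end

section
/- Let m ≠ 0, ω > 0, h > 0 be real with ω²h² ≠ 8. Suppose real numbers q_{j−1}, q_j, q_{j+1} satisfy the symplectic Simpson scheme (1/h²)(q_{j+1} − 2q_j + q_{j−1}) + (ω²/24)(q_{j+1} + 22q_j + q_{j−1}) − (ω⁴h²/24)q_j = 0, and define p_j = m(q_j − q_{j−1})/h − h(mω²/6)·(q_{j−1} + 2q_j)/(1 − ω²h²/8) + h³(mω⁴/48)·q_j/(1 − ω²h²/8) and p_{j+1} = m(q_{j+1} − q_j)/h − h(mω²/6)·(q_j + 2q_{j+1})/(1 − ω²h²/8) + h³(mω⁴/48)·q_{j+1}/(1 − ω²h²/8). Then (p_{j+1}, q_{j+1})ᵗ = Φ₃·(p_j, q_j)ᵗ, where Φ₃ is the 2×2 real matrix with common prefactor 1/(1 + ω²h²/24) and entries (Φ₃)₁₁ = (Φ₃)₂₂ = 1 − (11/24)ω²h² + ω⁴h⁴/48,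 (Φ₃)₁₂ = −mω²h·(1 − ω²h²/12)·(1 − ω²h²/24), (Φ₃)₂₁ = (h/m)·(1 − ω²h²/8). -/
/-!
The Simpson scheme is the discrete Euler–Lagrange equation of a quadratic, symmetric discrete
Lagrangian: with `c = ω²h²`, `a = 48 - 22c + c²`, `b = 2(24 + c)` and `k = m / (6h(8 - c))`,
the momentum is `p(q₀, q₁) = k (a q₁ - b q₀)` and the scheme reads `b (q₀ + q₂) = 2a q₁`.
By the scheme, `p(q₀, q₁) = k (b q₂ - a q₁)`; solving this for `q₂` and substituting into
`p(q₁, q₂)` gives the one-step map `(p, q) ↦ (p', q')` as the matrix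
`b⁻¹ [[a, k(a² - b²)], [k⁻¹, a]]`, which for the Simpson coefficients is `Φ₃`
(here `a² - b² = c (c - 24) (c - 8) (c - 12)`).
-/

open Matrix

noncomputable section

/-- The momentum `∂L/∂q₁` of the discrete Lagrangian `L(q₀, q₁) = k (a (q₀² + q₁²) / 2 - b q₀ q₁)`. -/
def quadMomentum (k a b q₀ q₁ : ℝ) : ℝ := k * (a * q₁ - b * q₀)

def quadTransferMatrix (k a b : ℝ) : Matrix (Fin 2) (Fin 2) ℝ :=
  b⁻¹ • !![a, k * (a ^ 2 - b ^ 2); k⁻¹, a]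

theorem quadTransferMatrix_mulVec_quadMomentum {k a b q₀ q₁ q₂ : ℝ} (hk : k ≠ 0) (hb : b ≠ 0)
    (hEL : b * (q₀ + q₂) = 2 * a * q₁) :
    quadTransferMatrix k a b *ᵥ ![quadMomentum k a b q₀ q₁, q₁]
      = ![quadMomentum k a b q₁ q₂, q₂] := by
  have hq₀ : q₀ = (2 * a * q₁ - b * q₂) / b := by
    rw [eq_div_iff hb]
    linarith
  rw [mulVec_fin_two]
  refine vec2_eq ?_ ?_ <;>
    simp only [quadTransferMatrix, quadMomentum, hq₀, Matrix.smul_apply, of_apply, cons_val',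
      cons_val_zero, cons_val_one, cons_val_fin_one, smul_eq_mul, Fin.isValue] <;>
    field_simp <;>
    ring

section Simpson

variable (m ω h : ℝ)

def simpsonA (c : ℝ) : ℝ := 48 - 22 * c + c ^ 2

def simpsonB (c : ℝ) : ℝ := 2 * (24 + c)

/-- The momentum `p_r = ∂L_h^r/∂q_r` of the reduced Lagrangian on the pair `(q₀, q₁)`. -/
def simpsonMomentum (q₀ q₁ : ℝ) : ℝ :=
  m * (q₁ - q₀) / h
    - h * (m * ω ^ 2 / 6) * ((q₀ + 2 * q₁) / (1 - ω ^ 2 * h ^ 2 / 8))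
    + h ^ 3 * (m * ω ^ 4 / 48) * (q₁ / (1 - ω ^ 2 * h ^ 2 / 8))

def simpsonMatrix : Matrix (Fin 2) (Fin 2) ℝ :=
  (1 / (1 + ω ^ 2 * h ^ 2 / 24)) •
    !![1 - (11 / 24) * ω ^ 2 * h ^ 2 + ω ^ 4 * h ^ 4 / 48,
         -(m * ω ^ 2 * h) * (1 - ω ^ 2 * h ^ 2 / 12) * (1 - ω ^ 2 * h ^ 2 / 24);
       (h / m) * (1 - ω ^ 2 * h ^ 2 / 8),
         1 - (11 / 24) * ω ^ 2 * h ^ 2 + ω ^ 4 * h ^ 4 / 48]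

variable {m ω h}

theorem simpson_scheme_discrete_euler_lagrange {q₀ q₁ q₂ : ℝ} (hh : h ≠ 0)
    (hscheme : (1 / h ^ 2) * (q₂ - 2 * q₁ + q₀)
        + (ω ^ 2 / 24) * (q₂ + 22 * q₁ + q₀)
        - (ω ^ 4 * h ^ 2 / 24) * q₁ = 0) :
    simpsonB (ω ^ 2 * h ^ 2) * (q₀ + q₂) = 2 * simpsonA (ω ^ 2 * h ^ 2) * q₁ := by
  field_simp at hscheme
  unfold simpsonA simpsonB
  linear_combination 2 * hscheme

theorem simpsonMomentum_eq_quadMomentum (hh : h ≠ 0) (hstab : ω ^ 2 * h ^ 2 ≠ 8) (q₀ q₁ : ℝ) :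
    simpsonMomentum m ω h q₀ q₁
      = quadMomentum (m / (6 * h * (8 - ω ^ 2 * h ^ 2)))
          (simpsonA (ω ^ 2 * h ^ 2)) (simpsonB (ω ^ 2 * h ^ 2)) q₀ q₁ := by
  have h8 : 8 - ω ^ 2 * h ^ 2 ≠ 0 := sub_ne_zero.mpr hstab.symm
  unfold simpsonMomentum quadMomentum simpsonA simpsonB
  rw [show 1 - ω ^ 2 * h ^ 2 / 8 = (8 - ω ^ 2 * h ^ 2) / 8 by ring]
  -- an atom `d`, so that `field_simp` cannot reorder `8 - ω ^ 2 * h ^ 2` out of reach of `h8`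
  generalize hd : 8 - ω ^ 2 * h ^ 2 = d at *
  field_simp
  subst hd
  ring

theorem simpsonMatrix_eq_quadTransferMatrix (hh : h ≠ 0)
    (hstab : ω ^ 2 * h ^ 2 ≠ 8) :
    simpsonMatrix m ω h
      = quadTransferMatrix (m / (6 * h * (8 - ω ^ 2 * h ^ 2)))
          (simpsonA (ω ^ 2 * h ^ 2)) (simpsonB (ω ^ 2 * h ^ 2)) := by
  ext i j
  fin_cases i <;> fin_cases j <;>
    simp only [simpsonMatrix, quadTransferMatrix, simpsonA, simpsonB, Matrix.smul_apply, of_apply,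
      cons_val', cons_val_zero, cons_val_one, cons_val_fin_one, smul_eq_mul, Fin.zero_eta,
      Fin.mk_one, Fin.isValue] <;>
    field_simp <;>
    ring

end Simpson

end

theorem simpson_scheme_matrix_form_general
    (m ω h : ℝ) (hm : m ≠ 0) (hh : 0 < h)
    (hstab : ω ^ 2 * h ^ 2 ≠ 8)
    (qjm qj qjp pj pjp : ℝ)
    (hscheme : (1 / h ^ 2) * (qjp - 2 * qj + qjm)
        + (ω ^ 2 / 24) * (qjp + 22 * qj + qjm)
        - (ω ^ 4 * h ^ 2 / 24) * qj = 0)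
    (hpj : pj = m * (qj - qjm) / h
        - h * (m * ω ^ 2 / 6) * ((qjm + 2 * qj) / (1 - ω ^ 2 * h ^ 2 / 8))
        + h ^ 3 * (m * ω ^ 4 / 48) * (qj / (1 - ω ^ 2 * h ^ 2 / 8)))
    (hpjp : pjp = m * (qjp - qj) / h
        - h * (m * ω ^ 2 / 6) * ((qj + 2 * qjp) / (1 - ω ^ 2 * h ^ 2 / 8))
        + h ^ 3 * (m * ω ^ 4 / 48) * (qjp / (1 - ω ^ 2 * h ^ 2 / 8))) :
    ((1 / (1 + ω ^ 2 * h ^ 2 / 24)) •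
        !![1 - (11 / 24) * ω ^ 2 * h ^ 2 + ω ^ 4 * h ^ 4 / 48,
             -(m * ω ^ 2 * h) * (1 - ω ^ 2 * h ^ 2 / 12) * (1 - ω ^ 2 * h ^ 2 / 24);
           (h / m) * (1 - ω ^ 2 * h ^ 2 / 8),
             1 - (11 / 24) * ω ^ 2 * h ^ 2 + ω ^ 4 * h ^ 4 / 48]).mulVec ![pj, qj]
      = ![pjp, qjp] := by
  have hh0 : h ≠ 0 := hh.ne'
  have hk : m / (6 * h * (8 - ω ^ 2 * h ^ 2)) ≠ 0 :=
    div_ne_zero hm (mul_ne_zero (by positivity) (sub_ne_zero.mpr hstab.symm))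
  have hb : simpsonB (ω ^ 2 * h ^ 2) ≠ 0 := by unfold simpsonB; positivity
  subst hpj hpjp
  change simpsonMatrix m ω h *ᵥ ![simpsonMomentum m ω h qjm qj, qj]
    = ![simpsonMomentum m ω h qj qjp, qjp]
  rw [simpsonMatrix_eq_quadTransferMatrix hh0 hstab,
    simpsonMomentum_eq_quadMomentum hh0 hstab, simpsonMomentum_eq_quadMomentum hh0 hstab]
  exact quadTransferMatrix_mulVec_quadMomentum hk hb
    (simpson_scheme_discrete_euler_lagrange hh0 hscheme)

/-- Eliminating q_{j-1} from the symplectic Simpson scheme and the discrete momenta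
yields the one-step matrix form with the matrix Φ₃. -/
theorem simpson_scheme_matrix_form
    (m ω h : ℝ) (hm : m ≠ 0) (hω : 0 < ω) (hh : 0 < h)
    (hstab : ω ^ 2 * h ^ 2 ≠ 8)
    (qjm qj qjp pj pjp : ℝ)
    (hscheme : (1 / h ^ 2) * (qjp - 2 * qj + qjm)
        + (ω ^ 2 / 24) * (qjp + 22 * qj + qjm)
        - (ω ^ 4 * h ^ 2 / 24) * qj = 0)
    (hpj : pj = m * (qj - qjm) / h
        - h * (m * ω ^ 2 / 6) * ((qjm + 2 * qj) / (1 - ω ^ 2 * h ^ 2 / 8))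
        + h ^ 3 * (m * ω ^ 4 / 48) * (qj / (1 - ω ^ 2 * h ^ 2 / 8)))
    (hpjp : pjp = m * (qjp - qj) / h
        - h * (m * ω ^ 2 / 6) * ((qj + 2 * qjp) / (1 - ω ^ 2 * h ^ 2 / 8))
        + h ^ 3 * (m * ω ^ 4 / 48) * (qjp / (1 - ω ^ 2 * h ^ 2 / 8))) :
    ((1 / (1 + ω ^ 2 * h ^ 2 / 24)) •
        !![1 - (11 / 24) * ω ^ 2 * h ^ 2 + ω ^ 4 * h ^ 4 / 48,
             -(m * ω ^ 2 * h) * (1 - ω ^ 2 * h ^ 2 / 12) * (1 - ω ^ 2 * h ^ 2 / 24);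
           (h / m) * (1 - ω ^ 2 * h ^ 2 / 8),
             1 - (11 / 24) * ω ^ 2 * h ^ 2 + ω ^ 4 * h ^ 4 / 48]).mulVec ![pj, qj]
      = ![pjp, qjp] :=
  simpson_scheme_matrix_form_general m ω h hm hh hstab qjm qj qjp pj pjp hscheme hpj hpjp
end

section
/- Let m ≠ 0, ω, h > 0 be real with ω²h² ≠ 8. The matrix Φ₃ = (1/(1 + ω²h²/24))·[[1 − (11/24)ω²h² + ω⁴h⁴/48, −mω²h(1 − ω²h²/12)(1 − ω²h²/24)], [(h/m)(1 − ω²h²/8), 1 − (11/24)ω²h² + ω⁴h⁴/48]] has determinant 1; in particular the symplectic Simpson scheme (p, q) ↦ Φ₃·(p, q)ᵗ is symplectic. -/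
/-! With `x = ω²h²`, the mass `m` cancels from the product of the off-diagonal entries, so the
determinant of the bracketed matrix is a polynomial in `x` alone, and it equals the square
`(1 + x/24)²` of the normalising denominator. -/

theorem simpson_det_polynomial_identity (x : ℝ) :
    (1 - 11 / 24 * x + x ^ 2 / 48) ^ 2 + x * (1 - x / 12) * (1 - x / 24) * (1 - x / 8)
      = (1 + x / 24) ^ 2 := by
  ring

theorem det_smul_fin_two_of {R : Type*} [CommRing R] (c a b d e : R) :
    (c • !![a, b; d, e]).det = c ^ 2 * (a * e - b * d) := by
  rw [Matrix.det_smul, Fintype.card_fin, Matrix.det_fin_two_of]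

theorem simpson_scheme_det_one_general
    (m ω h : ℝ) (hm : m ≠ 0) :
    ((1 / (1 + ω ^ 2 * h ^ 2 / 24)) •
        !![1 - (11 / 24) * ω ^ 2 * h ^ 2 + ω ^ 4 * h ^ 4 / 48,
             -(m * ω ^ 2 * h) * (1 - ω ^ 2 * h ^ 2 / 12) * (1 - ω ^ 2 * h ^ 2 / 24);
           (h / m) * (1 - ω ^ 2 * h ^ 2 / 8),
             1 - (11 / 24) * ω ^ 2 * h ^ 2 + ω ^ 4 * h ^ 4 / 48]).det = 1 := by
  have hden : 1 + ω ^ 2 * h ^ 2 / 24 ≠ 0 := by positivity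
  have hmass : m * ω ^ 2 * h * (h / m) = ω ^ 2 * h ^ 2 := by field_simp
  have hdet : (1 - (11 / 24) * ω ^ 2 * h ^ 2 + ω ^ 4 * h ^ 4 / 48) ^ 2
      - -(m * ω ^ 2 * h) * (1 - ω ^ 2 * h ^ 2 / 12) * (1 - ω ^ 2 * h ^ 2 / 24)
        * ((h / m) * (1 - ω ^ 2 * h ^ 2 / 8))
      = (1 + ω ^ 2 * h ^ 2 / 24) ^ 2 := by
    linear_combination simpson_det_polynomial_identity (ω ^ 2 * h ^ 2)
      + (1 - ω ^ 2 * h ^ 2 / 12) * (1 - ω ^ 2 * h ^ 2 / 24) * (1 - ω ^ 2 * h ^ 2 / 8) * hmass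
  rw [det_smul_fin_two_of, ← sq, hdet, one_div, inv_pow, inv_mul_cancel₀ (pow_ne_zero 2 hden)]

/-- The matrix Φ₃ of the symplectic Simpson scheme has determinant one:
the scheme is symplectic. -/
theorem simpson_scheme_det_one
    (m ω h : ℝ) (hm : m ≠ 0) (hω : 0 < ω) (hh : 0 < h)
    (hstab : ω ^ 2 * h ^ 2 ≠ 8) :
    ((1 / (1 + ω ^ 2 * h ^ 2 / 24)) •
        !![1 - (11 / 24) * ω ^ 2 * h ^ 2 + ω ^ 4 * h ^ 4 / 48,
             -(m * ω ^ 2 * h) * (1 - ω ^ 2 * h ^ 2 / 12) * (1 - ω ^ 2 * h ^ 2 / 24);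
           (h / m) * (1 - ω ^ 2 * h ^ 2 / 8),
             1 - (11 / 24) * ω ^ 2 * h ^ 2 + ω ^ 4 * h ^ 4 / 48]).det = 1 :=
  simpson_scheme_det_one_general m ω h hm
end

section
/- Let m ≠ 0, ω, h > 0 be real with ω²h² ≠ 8, and define the discrete Hamiltonian H_d(p, q) = p²/(2m) + (mω²/2)·((1 − ω²h²/12)·(1 − ω²h²/24)/(1 − ω²h²/8))·q². If (p', q')ᵗ = Φ₃·(p, q)ᵗ, where Φ₃ = (1/(1 + ω²h²/24))·[[1 − (11/24)ω²h² + ω⁴h⁴/48, −mω²h(1 − ω²h²/12)(1 − ω²h²/24)], [(h/m)(1 − ω²h²/8), 1 − (11/24)ω²h² + ω⁴h⁴/48]], then H_d(p', q') = H_d(p, q); that is, the symplectic Simpson scheme exactly conserves the discrete energy H_d. -/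
set_option maxHeartbeats 2000000 in
/-- The symplectic Simpson scheme exactly conserves the discrete energy H_d. -/
theorem simpson_scheme_conserves_discrete_energy
    (m ω h : ℝ) (hm : m ≠ 0) (hω : 0 < ω) (hh : 0 < h)
    (hstab : ω ^ 2 * h ^ 2 ≠ 8)
    (Hd : ℝ → ℝ → ℝ)
    (hHd : ∀ p q : ℝ, Hd p q = p ^ 2 / (2 * m)
      + (m * ω ^ 2 / 2) *
        ((1 - ω ^ 2 * h ^ 2 / 12) * (1 - ω ^ 2 * h ^ 2 / 24)
          / (1 - ω ^ 2 * h ^ 2 / 8)) * q ^ 2)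
    (p q p' q' : ℝ)
    (hstep : ((1 / (1 + ω ^ 2 * h ^ 2 / 24)) •
        !![1 - (11 / 24) * ω ^ 2 * h ^ 2 + ω ^ 4 * h ^ 4 / 48,
             -(m * ω ^ 2 * h) * (1 - ω ^ 2 * h ^ 2 / 12) * (1 - ω ^ 2 * h ^ 2 / 24);
           (h / m) * (1 - ω ^ 2 * h ^ 2 / 8),
             1 - (11 / 24) * ω ^ 2 * h ^ 2 + ω ^ 4 * h ^ 4 / 48]).mulVec ![p, q]
      = ![p', q']) :
    Hd p' q' = Hd p q := by
  have h0 : (1 : ℝ) + ω ^ 2 * h ^ 2 / 24 ≠ 0 := by positivity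
  have h8 : (1 : ℝ) - ω ^ 2 * h ^ 2 / 8 ≠ 0 := by
    intro hc
    apply hstab
    linarith [hc]
  have hp' : p' = (1 / (1 + ω ^ 2 * h ^ 2 / 24)) *
      ((1 - (11 / 24) * ω ^ 2 * h ^ 2 + ω ^ 4 * h ^ 4 / 48) * p
        + (-(m * ω ^ 2 * h) * (1 - ω ^ 2 * h ^ 2 / 12) * (1 - ω ^ 2 * h ^ 2 / 24)) * q) := by
    have h1 := congrFun hstep 0
    simp [Matrix.mulVec, dotProduct, Fin.sum_univ_two] at h1
    rw [← h1]; ring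
  have hq' : q' = (1 / (1 + ω ^ 2 * h ^ 2 / 24)) *
      ((h / m) * (1 - ω ^ 2 * h ^ 2 / 8) * p
        + (1 - (11 / 24) * ω ^ 2 * h ^ 2 + ω ^ 4 * h ^ 4 / 48) * q) := by
    have h1 := congrFun hstep 1
    simp [Matrix.mulVec, dotProduct, Fin.sum_univ_two] at h1
    rw [← h1]; ring
  have hP : (1 + ω ^ 2 * h ^ 2 / 24) * p'
      = (1 - (11 / 24) * ω ^ 2 * h ^ 2 + ω ^ 4 * h ^ 4 / 48) * p
        - (m * ω ^ 2 * h) * (1 - ω ^ 2 * h ^ 2 / 12) * (1 - ω ^ 2 * h ^ 2 / 24) * q := by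
    rw [hp']; field_simp; ring
  have hQ : m * ((1 + ω ^ 2 * h ^ 2 / 24) * q')
      = h * (1 - ω ^ 2 * h ^ 2 / 8) * p
        + m * (1 - (11 / 24) * ω ^ 2 * h ^ 2 + ω ^ 4 * h ^ 4 / 48) * q := by
    rw [hq']; field_simp
  have key : (1 - ω ^ 2 * h ^ 2 / 8) * ((1 + ω ^ 2 * h ^ 2 / 24) * p') ^ 2
      + ω ^ 2 * (1 - ω ^ 2 * h ^ 2 / 12) * (1 - ω ^ 2 * h ^ 2 / 24)
        * (m * ((1 + ω ^ 2 * h ^ 2 / 24) * q')) ^ 2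
      = (1 - ω ^ 2 * h ^ 2 / 8) * (1 + ω ^ 2 * h ^ 2 / 24) ^ 2 * p ^ 2
      + ω ^ 2 * (1 - ω ^ 2 * h ^ 2 / 12) * (1 - ω ^ 2 * h ^ 2 / 24)
        * (1 + ω ^ 2 * h ^ 2 / 24) ^ 2 * m ^ 2 * q ^ 2 := by
    rw [hP, hQ]; ring
  have hc : (2 * m * (1 - ω ^ 2 * h ^ 2 / 8) * (1 + ω ^ 2 * h ^ 2 / 24) ^ 2) ≠ 0 := by
    exact mul_ne_zero (mul_ne_zero (mul_ne_zero two_ne_zero hm) h8) (pow_ne_zero _ h0)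
  rw [hHd p' q', hHd p q]
  generalize hgen : (1 - ω ^ 2 * h ^ 2 / 12) * (1 - ω ^ 2 * h ^ 2 / 24)
      / (1 - ω ^ 2 * h ^ 2 / 8) = K
  have hKD : K * (1 - ω ^ 2 * h ^ 2 / 8)
      = (1 - ω ^ 2 * h ^ 2 / 12) * (1 - ω ^ 2 * h ^ 2 / 24) := by
    rw [← hgen]; exact div_mul_cancel₀ _ h8
  apply mul_left_cancel₀ hc
  have expand : ∀ P Q : ℝ,
      2 * m * (1 - ω ^ 2 * h ^ 2 / 8) * (1 + ω ^ 2 * h ^ 2 / 24) ^ 2 *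
        (P ^ 2 / (2 * m) + m * ω ^ 2 / 2 * K * Q ^ 2)
      = (1 - ω ^ 2 * h ^ 2 / 8) * ((1 + ω ^ 2 * h ^ 2 / 24) * P) ^ 2
        + ω ^ 2 * (K * (1 - ω ^ 2 * h ^ 2 / 8)) * (m * ((1 + ω ^ 2 * h ^ 2 / 24) * Q)) ^ 2 := by
    intro P Q; field_simp
  rw [expand p' q', expand p q, hKD]
  linear_combination key
end
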